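/- Let S be a complete separable metric space, let f ∈ F₁(a,b) be admissible and strictly admissible, let Γ ⊂ C_b(S) be admissible, and let Q, P be Borel probability measures on S. For δ > 0 let Γ_δ = {δ·g : g ∈ Γ}. Then lim_{δ↓0} (1/δ)·D_f^{Γ_δ}(Q‖P) = W^Γ(Q,P). -/

import Mathlib

open MeasureTheory Filter Set Topology ENNReal
open scoped Classical

noncomputable section

/-- The set of bounded measurable real-valued functions on `Ω`. -/
def Mb (Ω : Type*) [MeasurableSpace Ω] : Set (Ω → ℝ) :=
  {g | Measurable g ∧ ∃ C : ℝ, ∀ x, |g x| ≤ C}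

/-- The set of bounded continuous real-valued functions on `S`. -/
def Cb (S : Type*) [TopologicalSpace S] : Set (S → ℝ) :=
  {g | Continuous g ∧ ∃ C : ℝ, ∀ x, |g x| ≤ C}

/-- The positive part of an extended real number, as an element of `ℝ≥0∞`. -/
def posE (x : EReal) : ℝ≥0∞ := if x = ⊤ then ⊤ else ENNReal.ofReal x.toReal

/-- The extended-real-valued integral of an `EReal`-valued function, defined as the
difference of the lower integrals of the positive and negative parts, with the
convention `∞ - ∞ = -∞`. -/
def eIntegral {Ω : Type*} [MeasurableSpace Ω] (P : Measure Ω) (h : Ω → EReal) : EReal :=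
  ((∫⁻ x, posE (h x) ∂P : ℝ≥0∞) : EReal) - ((∫⁻ x, posE (-(h x)) ∂P : ℝ≥0∞) : EReal)

/-- The Legendre transform `f*(y) = sup_x {x*y - f(x)}` of `f : ℝ → (-∞,∞]`. -/
def fstar (f : ℝ → EReal) (y : ℝ) : EReal := ⨆ x : ℝ, (((x * y : ℝ) : EReal) - f x)

/-- `f : ℝ → (-∞,∞]` is (the convex LSC extension of) an element of `F₁(a,b)`:
convex, lower semicontinuous, never `-∞`, finite exactly on the interval `(a,b)`
(with `+∞` strictly outside `[a,b]`), and `f(1) = 0` with `a < 1 < b`. -/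
structure IsF1 (a b : EReal) (f : ℝ → EReal) : Prop where
  a_lt_one : a < ((1 : ℝ) : EReal)
  one_lt_b : ((1 : ℝ) : EReal) < b
  convex : ∀ x y t : ℝ, 0 < t → t < 1 →
    f (t * x + (1 - t) * y) ≤ ((t : ℝ) : EReal) * f x + (((1 - t : ℝ)) : EReal) * f y
  lsc : LowerSemicontinuous f
  ne_bot : ∀ x, f x ≠ ⊥
  finite_on : ∀ x : ℝ, a < (x : EReal) → (x : EReal) < b → f x ≠ ⊤
  top_outside : ∀ x : ℝ, ((x : EReal) < a ∨ b < (x : EReal)) → f x = ⊤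
  at_one : f 1 = 0

/-- `Λ_f^P[g] = inf_{ν ∈ ℝ} {ν + E_P[f*(g - ν)]}`. -/
def LambdaF {Ω : Type*} [MeasurableSpace Ω] (f : ℝ → EReal) (P : Measure Ω) (g : Ω → ℝ) :
    EReal :=
  ⨅ ν : ℝ, ((ν : EReal) + eIntegral P (fun x => fstar f (g x - ν)))

/-- The classical `f`-divergence `D_f(Q‖P) = E_P[f(dQ/dP)]` if `Q ≪ P`, else `∞`. -/
def fDivE {Ω : Type*} [MeasurableSpace Ω] (f : ℝ → EReal) (Q P : Measure Ω) : EReal :=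
  if Q ≪ P then eIntegral P (fun x => f ((Q.rnDeriv P x).toReal)) else ⊤

/-- The `(f,Γ)`-divergence `D_f^Γ(Q‖P) = sup_{g ∈ Γ} {E_Q[g] - Λ_f^P[g]}`. -/
def fGammaDiv {Ω : Type*} [MeasurableSpace Ω] (f : ℝ → EReal) (Γ : Set (Ω → ℝ))
    (Q P : Measure Ω) : EReal :=
  ⨆ g ∈ Γ, (((∫ x, g x ∂Q : ℝ) : EReal) - LambdaF f P g)

/-- The `Γ`-IPM `W^Γ(Q,P) = sup_{g ∈ Γ} {E_Q[g] - E_P[g]}`. -/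
def ipmW {Ω : Type*} [MeasurableSpace Ω] (Γ : Set (Ω → ℝ)) (Q P : Measure Ω) : EReal :=
  ⨆ g ∈ Γ, (((∫ x, g x ∂Q : ℝ) : EReal) - ((∫ x, g x ∂P : ℝ) : EReal))


/-- Integration of a function against a finite signed measure, via the Jordan
decomposition. -/
def signedIntegral {S : Type*} [MeasurableSpace S] (μ : MeasureTheory.SignedMeasure S)
    (g : S → ℝ) : ℝ :=
  (∫ x, g x ∂μ.toJordanDecomposition.posPart) - ∫ x, g x ∂μ.toJordanDecomposition.negPart

/-- The weak topology on real-valued functions on `S` generated by the maps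
`g ↦ ∫ g dμ` for all finite signed (Borel) measures `μ` on `S`. -/
def weakTop (S : Type*) [MeasurableSpace S] : TopologicalSpace (S → ℝ) :=
  ⨅ μ : MeasureTheory.SignedMeasure S,
    TopologicalSpace.induced (fun g => signedIntegral μ g) inferInstance

/-- A set `Ψ` of functions is `P(S)`-determining: if two probability measures give the
same integral to every `ψ ∈ Ψ`, then they are equal. -/
def Determining {S : Type*} [MeasurableSpace S] (Ψ : Set (S → ℝ)) : Prop :=
  ∀ Q P : Measure S, IsProbabilityMeasure Q → IsProbabilityMeasure P →
    (∀ ψ ∈ Ψ, (∫ x, ψ x ∂Q) = ∫ x, ψ x ∂P) → Q = P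

/-- `Γ ⊆ C_b(S)` is admissible: it contains `0`, is convex, and is closed in `C_b(S)` for
the weak topology generated by the finite signed measures. -/
def AdmissibleGamma {S : Type*} [TopologicalSpace S] [MeasurableSpace S]
    (Γ : Set (S → ℝ)) : Prop :=
  (fun _ => (0 : ℝ)) ∈ Γ ∧ Convex ℝ Γ ∧ Γ ⊆ Cb S ∧
    ∀ g ∈ Cb S, g ∈ @closure _ (weakTop S) Γ → g ∈ Γ

/-- `Γ` is strictly admissible: there is a `P(S)`-determining set `Ψ ⊆ C_b(S)` such that
for all `ψ ∈ Ψ` there are `c ∈ ℝ` and `ε > 0` with `c ± εψ ∈ Γ`. -/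
def StrictlyAdmissibleGamma {S : Type*} [TopologicalSpace S] [MeasurableSpace S]
    (Γ : Set (S → ℝ)) : Prop :=
  ∃ Ψ : Set (S → ℝ), Ψ ⊆ Cb S ∧ Determining Ψ ∧
    ∀ ψ ∈ Ψ, ∃ c ε : ℝ, 0 < ε ∧
      (fun x => c + ε * ψ x) ∈ Γ ∧ (fun x => c - ε * ψ x) ∈ Γ

/-- `f` is admissible: `f*` is finite everywhere and `lim_{y → -∞} f*(y) < ∞`. -/
def AdmissibleF (f : ℝ → EReal) : Prop :=
  (∀ y : ℝ, fstar f y ≠ ⊤) ∧ ∃ M : ℝ, ∀ᶠ y in Filter.atBot, fstar f y ≤ (M : EReal)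

/-- `f` is strictly convex at `1`: `f` is not affine on any neighborhood of `1`. -/
def StrictlyConvexAtOne (f : ℝ → EReal) : Prop :=
  ∀ ε : ℝ, 0 < ε → ¬ ∃ m q : ℝ, ∀ x : ℝ, |x - 1| < ε → f x = ((m * x + q : ℝ) : EReal)

/-- `f` is strictly convex on the interval `(a,b)` (with `a, b ∈ [-∞,∞]`). -/
def StrictConvexOnAB (a b : EReal) (f : ℝ → EReal) : Prop :=
  ∀ x y t : ℝ, a < (x : EReal) → (x : EReal) < b → a < (y : EReal) → (y : EReal) < b →
    x ≠ y → 0 < t → t < 1 →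
    f (t * x + (1 - t) * y) < ((t : ℝ) : EReal) * f x + (((1 - t : ℝ)) : EReal) * f y

end

/-!
Since `f 1 = 0`, `f* y ≥ y`; hence `Λ_f^P[δ g] ≥ δ E_P[g]` and `D_f^{Γ_δ}(Q‖P) ≤ δ W^Γ(Q,P)`.
Conversely, let `y₀` be the slope of a support line of `f` at `1`, so that `f* y₀ = y₀`. Strict
convexity at `1` forces `f` to leave this line on one side of `1`, and there `f` lies above
slightly tilted lines; dually, `f*` has one-sided slope `1` at `y₀`. Choosing `ν` so that
`δ g - ν` stays on that side of `y₀` gives `Λ_f^P[δ g] ≤ δ E_P[g] + o(δ)` for each `g ∈ Γ`.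
-/

lemma coe_le_fstar {f : ℝ → EReal} (h1 : f 1 = 0) (y : ℝ) : (y : EReal) ≤ fstar f y :=
  le_iSup_of_le 1 (by simp [h1])

lemma fstar_le_of_forall_le {f : ℝ → EReal} {m β : ℝ}
    (h : ∀ x, ((m * (x - 1) - β : ℝ) : EReal) ≤ f x) : fstar f m ≤ ((m + β : ℝ) : EReal) := by
  refine iSup_le fun x => (EReal.sub_le_sub le_rfl (h x)).trans_eq ?_
  rw [← EReal.coe_sub]
  ring_nf

namespace IsF1

variable {a b : EReal} {f : ℝ → EReal}

lemma eq_top_or_eq_coe (hf : IsF1 a b f) (x : ℝ) : f x = ⊤ ∨ ∃ r : ℝ, f x = r := by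
  induction h : f x using EReal.rec with
  | bot => exact absurd h (hf.ne_bot x)
  | coe r => exact Or.inr ⟨r, rfl⟩
  | top => exact Or.inl rfl

lemma apply_combo_le (hf : IsF1 a b f) {x y t α β : ℝ} (ht₀ : 0 < t) (ht₁ : t < 1)
    (hx : f x ≤ α) (hy : f y ≤ β) :
    f (t * x + (1 - t) * y) ≤ ((t * α + (1 - t) * β : ℝ) : EReal) := by
  refine (hf.convex x y t ht₀ ht₁).trans ?_
  rw [EReal.coe_add, EReal.coe_mul, EReal.coe_mul]
  gcongr

lemma convexOn_toReal (hf : IsF1 a b f) :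
    ConvexOn ℝ {x | f x ≠ ⊤} (fun x => (f x).toReal) := by
  have hcoe : ∀ x, f x ≠ ⊤ → f x = ((f x).toReal : EReal) := fun x hx =>
    (EReal.coe_toReal hx (hf.ne_bot x)).symm
  have key : ∀ x ∈ {x | f x ≠ ⊤}, ∀ y ∈ {x | f x ≠ ⊤}, ∀ s t : ℝ, 0 < s → 0 < t → s + t = 1 →
      f (s * x + t * y) ≤ ((s * (f x).toReal + t * (f y).toReal : ℝ) : EReal) := by
    intro x hx y hy s t hs ht hst
    obtain rfl : t = 1 - s := by linarith
    exact hf.apply_combo_le hs (by linarith) (hcoe x hx).le (hcoe y hy).le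
  refine convexOn_iff_forall_pos.2 ⟨convex_iff_forall_pos.2 fun x hx y hy s t hs ht hst => ?_,
    fun x hx y hy s t hs ht hst => ?_⟩
  · exact ne_top_of_le_ne_top (EReal.coe_ne_top _) (key x hx y hy s t hs ht hst)
  · have h := key x hx y hy s t hs ht hst
    rw [hcoe _ (ne_top_of_le_ne_top (EReal.coe_ne_top _) h), EReal.coe_le_coe_iff] at h
    exact h

lemma one_mem_interior_dom (hf : IsF1 a b f) : (1 : ℝ) ∈ interior {x | f x ≠ ⊤} := by
  refine interior_mono
    (fun x (hx : x ∈ ((↑) : ℝ → EReal) ⁻¹' Ioo a b) => hf.finite_on x hx.1 hx.2) ?_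
  rw [(isOpen_Ioo.preimage continuous_coe_real_ereal).interior_eq]
  exact ⟨hf.a_lt_one, hf.one_lt_b⟩

lemma exists_support_line (hf : IsF1 a b f) :
    ∃ y₀ : ℝ, ∀ x, ((y₀ * (x - 1) : ℝ) : EReal) ≤ f x := by
  have hconv := hf.convexOn_toReal
  have h1 := hf.one_mem_interior_dom
  refine ⟨derivWithin (fun x => (f x).toReal) (Ioi 1) 1, fun x => ?_⟩
  rcases hf.eq_top_or_eq_coe x with hx | ⟨r, hx⟩
  · simp [hx]
  have hxD : x ∈ {x | f x ≠ ⊤} := by simp [hx]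
  rw [hx, EReal.coe_le_coe_iff]
  rcases lt_trichotomy x 1 with hx1 | rfl | hx1
  · have h := (hconv.slope_le_leftDeriv_of_mem_interior hxD h1 hx1).trans
      (hconv.leftDeriv_le_rightDeriv_of_mem_interior h1)
    rw [slope_def_field, hx, hf.at_one, EReal.toReal_coe, EReal.toReal_zero,
      div_le_iff₀ (sub_pos.2 hx1)] at h
    linarith
  · simp [← EReal.coe_le_coe_iff, ← hx, hf.at_one]
  · have h := hconv.rightDeriv_le_slope_of_mem_interior h1 hxD hx1
    rw [slope_def_field, hx, hf.at_one, EReal.toReal_coe, EReal.toReal_zero,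
      le_div_iff₀ (sub_pos.2 hx1)] at h
    linarith

lemma exists_tilted_support_line (hf : IsF1 a b f) {y₀ u : ℝ}
    (hy₀ : ∀ x, ((y₀ * (x - 1) : ℝ) : EReal) ≤ f x) (hu : ((y₀ * u : ℝ) : EReal) < f (1 + u)) :
    ∃ c > 0, ∀ t ∈ Icc 0 c, ∀ x, (((y₀ + t * u) * (x - 1) - t * u ^ 2 : ℝ) : EReal) ≤ f x := by
  have hu0 : u ≠ 0 := by rintro rfl; simp [hf.at_one] at hu
  have hu2 : 0 < u ^ 2 := by positivity
  obtain ⟨z, hz, hzf⟩ := EReal.lt_iff_exists_real_btwn.1 hu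
  have hz : y₀ * u < z := by exact_mod_cast hz
  refine ⟨(z - y₀ * u) / u ^ 2, div_pos (by linarith) hu2, fun t ⟨ht₀, htc⟩ x => ?_⟩
  rw [le_div_iff₀ hu2] at htc
  obtain ⟨v, rfl⟩ : ∃ v, x = 1 + v * u := ⟨(x - 1) / u, by field_simp; ring⟩
  rcases le_or_gt v 1 with hv | hv
  · refine le_trans ?_ (hy₀ _)
    rw [EReal.coe_le_coe_iff]
    nlinarith [mul_nonneg ht₀ hu2.le]
  rcases hf.eq_top_or_eq_coe (1 + v * u) with hx | ⟨r, hx⟩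
  · simp [hx]
  -- `1 + u` lies between `1` and `1 + v u`, so convexity bounds `f (1 + u)` by `f (1 + v u) / v`
  have hseg := hf.apply_combo_le (x := 1 + v * u) (y := 1) (t := 1 / v) (α := r) (β := 0)
    (by positivity) ((div_lt_one (by linarith)).2 hv) hx.le (by simp [hf.at_one])
  have harg : 1 / v * (1 + v * u) + (1 - 1 / v) * 1 = 1 + u := by field_simp; ring
  rw [harg] at hseg
  have hzr : v * z < r := by
    have := hzf.trans_le hseg
    rw [EReal.coe_lt_coe_iff, mul_zero, add_zero, div_mul_eq_mul_div, one_mul,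
      lt_div_iff₀ (by linarith)] at this
    linarith
  rw [hx, EReal.coe_le_coe_iff]
  nlinarith [mul_nonneg ht₀ hu2.le]

lemma exists_side_lt_of_support_line (hf : IsF1 a b f) (hfs : StrictlyConvexAtOne f) {y₀ : ℝ}
    (hy₀ : ∀ x, ((y₀ * (x - 1) : ℝ) : EReal) ≤ f x) :
    ∃ σ : ℝ, |σ| = 1 ∧ ∀ ε > 0, ((y₀ * (σ * ε) : ℝ) : EReal) < f (1 + σ * ε) := by
  by_contra! h
  obtain ⟨ε₁, hε₁, h₁⟩ := h 1 abs_one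
  obtain ⟨ε₂, hε₂, h₂⟩ := h (-1) (by simp)
  refine hfs (min ε₁ ε₂) (lt_min hε₁ hε₂) ⟨y₀, -y₀, fun x hx => le_antisymm ?_ ?_⟩
  · obtain ⟨hx₁, hx₂⟩ := abs_lt.1 hx
    have hθ : 0 < (x - 1 + ε₂) / (ε₁ + ε₂) := by
      apply div_pos <;> linarith [min_le_right ε₁ ε₂]
    have hθ' : (x - 1 + ε₂) / (ε₁ + ε₂) < 1 := by
      rw [div_lt_one (by linarith)]; linarith [min_le_left ε₁ ε₂]
    have := hf.apply_combo_le hθ hθ' h₁ h₂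
    convert this using 2 <;> field_simp <;> ring
  · convert hy₀ x using 2; ring

/-- Together with `f* y ≥ y`: `f*` fixes `y₀` and has one-sided derivative `1` there, on the
side of `σ`. -/
theorem exists_fstar_le_one_sided (hf : IsF1 a b f) (hfs : StrictlyConvexAtOne f) :
    ∃ y₀ σ : ℝ, |σ| = 1 ∧ ∀ ε > 0, ∃ k > 0, ∀ t ∈ Icc 0 k,
      fstar f (y₀ + σ * t) ≤ ((y₀ + σ * t + ε * t : ℝ) : EReal) := by
  obtain ⟨y₀, hy₀⟩ := hf.exists_support_line
  obtain ⟨σ, hσ, hdir⟩ := hf.exists_side_lt_of_support_line hfs hy₀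
  refine ⟨y₀, σ, hσ, fun ε hε => ?_⟩
  obtain ⟨c, hc, hline⟩ := hf.exists_tilted_support_line hy₀ (hdir ε hε)
  have hσ2 : σ ^ 2 = 1 := by rw [← sq_abs, hσ, one_pow]
  refine ⟨c * ε, by positivity, fun t ⟨ht₀, htk⟩ => ?_⟩
  have h := fstar_le_of_forall_le (hline (t / ε) ⟨by positivity, (div_le_iff₀ hε).2 htk⟩)
  have e₁ : t / ε * (σ * ε) = σ * t := by field_simp
  have e₂ : t / ε * (σ * ε) ^ 2 = ε * t := by
    rw [mul_pow, hσ2, one_mul]; field_simp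
  rwa [e₁, e₂] at h

end IsF1

section Lambda

variable {Ω : Type*} [MeasurableSpace Ω] {P : Measure Ω} {f : ℝ → EReal}

lemma posE_mono : Monotone posE := by
  intro x y hxy
  unfold posE
  rcases eq_or_ne y ⊤ with rfl | hy
  · simp
  have hx : x ≠ ⊤ := ne_top_of_le_ne_top hy hxy
  rw [if_neg hx, if_neg hy]
  rcases eq_or_ne x ⊥ with rfl | hxb
  · simp
  · exact ENNReal.ofReal_le_ofReal (EReal.toReal_le_toReal hxy hxb hy)

lemma eIntegral_mono {h₁ h₂ : Ω → EReal} (h : ∀ x, h₁ x ≤ h₂ x) :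
    eIntegral P h₁ ≤ eIntegral P h₂ := by
  refine EReal.sub_le_sub ?_ ?_ <;> rw [EReal.coe_ennreal_le_coe_ennreal_iff] <;>
    refine lintegral_mono fun x => posE_mono ?_
  exacts [h x, EReal.neg_le_neg_iff.2 (h x)]

lemma eIntegral_coe {m : Ω → ℝ} (hm : Integrable m P) :
    eIntegral P (fun x => (m x : EReal)) = ∫ x, m x ∂P := by
  simp only [eIntegral, posE, ← EReal.coe_neg, EReal.coe_ne_top, if_false, EReal.toReal_coe]
  have hneg : (∫⁻ x, ENNReal.ofReal (-m x) ∂P) ≠ ⊤ := hm.neg.lintegral_lt_top.ne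
  rw [integral_eq_lintegral_pos_part_sub_lintegral_neg_part hm, EReal.coe_sub,
    EReal.coe_ennreal_toReal hm.lintegral_lt_top.ne, EReal.coe_ennreal_toReal hneg]

lemma LambdaF_le_of_fstar_le {g m : Ω → ℝ} {ν : ℝ} (hm : Integrable m P)
    (h : ∀ x, fstar f (g x - ν) ≤ m x) : LambdaF f P g ≤ ((ν + ∫ x, m x ∂P : ℝ) : EReal) := by
  refine (iInf_le _ ν).trans ?_
  rw [EReal.coe_add, ← eIntegral_coe hm]
  exact add_le_add le_rfl (eIntegral_mono h)

lemma integral_le_LambdaF [IsProbabilityMeasure P] (h1 : f 1 = 0) {g : Ω → ℝ}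
    (hg : Integrable g P) : ((∫ x, g x ∂P : ℝ) : EReal) ≤ LambdaF f P g := by
  refine le_iInf fun ν => ?_
  have hint : Integrable (fun x => g x - ν) P := hg.sub (integrable_const ν)
  calc ((∫ x, g x ∂P : ℝ) : EReal) = ν + eIntegral P (fun x => ((g x - ν : ℝ) : EReal)) := by
        rw [eIntegral_coe hint, integral_sub hg (integrable_const ν), ← EReal.coe_add]
        simp
    _ ≤ ν + eIntegral P (fun x => fstar f (g x - ν)) :=
        add_le_add le_rfl (eIntegral_mono fun x => coe_le_fstar h1 _)

lemma LambdaF_const_mul_le [IsProbabilityMeasure P] {y₀ σ k ε C δ : ℝ} (hσ : |σ| = 1)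
    (hε : 0 ≤ ε) (hk : ∀ t ∈ Icc 0 k, fstar f (y₀ + σ * t) ≤ ((y₀ + σ * t + ε * t : ℝ) : EReal))
    {g : Ω → ℝ} (hg : Integrable g P) (hC : ∀ x, |g x| ≤ C) (hδ : 0 ≤ δ) (hδk : 2 * δ * C ≤ k) :
    LambdaF f P (fun x => δ * g x) ≤ ((δ * ((∫ x, g x ∂P) + 2 * C * ε) : ℝ) : EReal) := by
  have hσ2 : σ * σ = 1 := by rw [← abs_mul_abs_self, hσ, one_mul]
  -- shift so that `δ g - ν` ranges over `y₀ + σ [0, 2 δ C]`, the side where `f*` has slope `1`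
  have hbound : ∀ x, fstar f (δ * g x - (-y₀ - σ * δ * C))
      ≤ ((δ * g x + (y₀ + σ * δ * C + 2 * δ * C * ε) : ℝ) : EReal) := by
    intro x
    have hσg : |σ * g x| ≤ C := by rw [abs_mul, hσ, one_mul]; exact hC x
    obtain ⟨hg₁, hg₂⟩ := abs_le.1 hσg
    have ht : δ * (C + σ * g x) ∈ Icc 0 k := ⟨by nlinarith, by nlinarith⟩
    have harg : δ * g x - (-y₀ - σ * δ * C) = y₀ + σ * (δ * (C + σ * g x)) := by
      linear_combination δ * g x * hσ2.symm
    have hσt : σ * (δ * (C + σ * g x)) = σ * δ * C + δ * g x := by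
      linear_combination δ * g x * hσ2
    rw [harg]
    refine (hk _ ht).trans (EReal.coe_le_coe_iff.2 ?_)
    nlinarith [mul_nonneg (mul_nonneg hε hδ) (sub_nonneg.2 hg₂)]
  have hm : Integrable (fun x => δ * g x + (y₀ + σ * δ * C + 2 * δ * C * ε)) P :=
    (hg.const_mul δ).add (integrable_const _)
  refine (LambdaF_le_of_fstar_le hm hbound).trans_eq ?_
  rw [integral_add (hg.const_mul δ) (integrable_const _), integral_const_mul, integral_const,
    probReal_univ, one_smul, EReal.coe_eq_coe_iff]
  ring

end Lambda

section Divergence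

variable {Ω : Type*} [MeasurableSpace Ω] {P Q : Measure Ω} [IsProbabilityMeasure P]
  {a b : EReal} {f : ℝ → EReal} {Γ : Set (Ω → ℝ)}

theorem IsF1.eventually_LambdaF_const_mul_le (hf : IsF1 a b f) (hfs : StrictlyConvexAtOne f)
    {g : Ω → ℝ} (hg : Integrable g P) {C : ℝ} (hC : ∀ x, |g x| ≤ C) {ε : ℝ} (hε : 0 < ε) :
    ∀ᶠ δ in 𝓝[>] 0, LambdaF f P (fun x => δ * g x) ≤ ((δ * ((∫ x, g x ∂P) + ε) : ℝ) : EReal) := by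
  obtain ⟨y₀, σ, hσ, hslope⟩ := hf.exists_fstar_le_one_sided hfs
  set C' := |C| + 1
  have hC' : 0 < C' := by positivity
  obtain ⟨k, hk, hk'⟩ := hslope (ε / (2 * C')) (by positivity)
  filter_upwards [Ioo_mem_nhdsGT (div_pos hk (mul_pos two_pos hC'))] with δ ⟨hδ, hδk⟩
  have h := LambdaF_const_mul_le hσ (by positivity) hk' hg
    (fun x => (hC x).trans ((le_abs_self C).trans (lt_add_one _).le)) hδ.le
    (by rw [lt_div_iff₀ (by positivity)] at hδk; linarith)
  rwa [show 2 * C' * (ε / (2 * C')) = ε by field_simp] at h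

lemma fGammaDiv_const_mul_le (h1 : f 1 = 0) (hΓ : ∀ g ∈ Γ, Integrable g P) {δ : ℝ}
    (hδ : 0 ≤ δ) :
    fGammaDiv f ((fun g x => δ * g x) '' Γ) Q P ≤ (δ : EReal) * ipmW Γ Q P := by
  rw [fGammaDiv, iSup_image]
  refine iSup₂_le fun g hg => ?_
  calc ((∫ x, δ * g x ∂Q : ℝ) : EReal) - LambdaF f P (fun x => δ * g x)
      ≤ ((∫ x, δ * g x ∂Q : ℝ) : EReal) - ((∫ x, δ * g x ∂P : ℝ) : EReal) :=
        EReal.sub_le_sub le_rfl (integral_le_LambdaF h1 ((hΓ g hg).const_mul δ))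
    _ = (δ : EReal) * (((∫ x, g x ∂Q : ℝ) : EReal) - ((∫ x, g x ∂P : ℝ) : EReal)) := by
        rw [integral_const_mul, integral_const_mul, ← EReal.coe_sub, ← EReal.coe_sub,
          ← EReal.coe_mul, mul_sub]
    _ ≤ (δ : EReal) * ipmW Γ Q P := by
        gcongr
        exact le_biSup (fun g => ((∫ x, g x ∂Q : ℝ) : EReal) - ((∫ x, g x ∂P : ℝ) : EReal)) hg

theorem IsF1.eventually_lt_inv_mul_fGammaDiv (hf : IsF1 a b f) (hfs : StrictlyConvexAtOne f)
    {g : Ω → ℝ} (hgΓ : g ∈ Γ) (hg : Integrable g P) {C : ℝ} (hC : ∀ x, |g x| ≤ C) {c : EReal}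
    (hc : c < (((∫ x, g x ∂Q) - ∫ x, g x ∂P : ℝ) : EReal)) :
    ∀ᶠ δ in 𝓝[>] 0, c < ((1 / δ : ℝ) : EReal) * fGammaDiv f ((fun g x => δ * g x) '' Γ) Q P := by
  obtain ⟨z, hcz, hz⟩ := EReal.lt_iff_exists_real_btwn.1 hc
  have hz : z < (∫ x, g x ∂Q) - ∫ x, g x ∂P := by exact_mod_cast hz
  filter_upwards [hf.eventually_LambdaF_const_mul_le hfs hg hC (sub_pos.2 hz),
    self_mem_nhdsWithin] with δ hΛ (hδ : 0 < δ)
  have hD : ((δ * z : ℝ) : EReal) ≤ fGammaDiv f ((fun g x => δ * g x) '' Γ) Q P := by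
    rw [fGammaDiv, iSup_image]
    refine le_iSup₂_of_le g hgΓ ((le_trans ?_ (EReal.sub_le_sub le_rfl hΛ)))
    rw [integral_const_mul, ← EReal.coe_sub, EReal.coe_le_coe_iff]
    linarith
  calc c < z := hcz
    _ = ((1 / δ : ℝ) : EReal) * ((δ * z : ℝ) : EReal) := by
        rw [← EReal.coe_mul, EReal.coe_eq_coe_iff]; field_simp
    _ ≤ ((1 / δ : ℝ) : EReal) * fGammaDiv f ((fun g x => δ * g x) '' Γ) Q P := by gcongr

end Divergence

lemma integrable_of_mem_Cb {S : Type*} [TopologicalSpace S] [MeasurableSpace S]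
    [OpensMeasurableSpace S] {μ : Measure S} [IsFiniteMeasure μ] {g : S → ℝ} (hg : g ∈ Cb S) :
    Integrable g μ :=
  Integrable.of_bound hg.1.aestronglyMeasurable hg.2.choose (ae_of_all _ hg.2.choose_spec)

theorem stmt13_general {S : Type*} [MetricSpace S] [MeasurableSpace S] [BorelSpace S]
    (a b : EReal) (f : ℝ → EReal) (hf : IsF1 a b f)
    (hfs : StrictlyConvexAtOne f)
    (Γ : Set (S → ℝ)) (hΓ : AdmissibleGamma Γ)
    (Q P : Measure S) [IsProbabilityMeasure P] :
    Filter.Tendsto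
      (fun δ : ℝ => (((1 / δ : ℝ)) : EReal)
        * fGammaDiv f ((fun (g : S → ℝ) => fun x => δ * g x) '' Γ) Q P)
      (𝓝[>] (0 : ℝ)) (𝓝 (ipmW Γ Q P)) := by
  have hCb : Γ ⊆ Cb S := hΓ.2.2.1
  refine tendsto_order.2 ⟨fun c hc => ?_, fun c hc => ?_⟩
  · obtain ⟨g, hgΓ, hcg⟩ : ∃ g ∈ Γ,
        c < ((∫ x, g x ∂Q : ℝ) : EReal) - ((∫ x, g x ∂P : ℝ) : EReal) := by
      simpa only [ipmW, lt_iSup_iff, exists_prop] using hc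
    rw [← EReal.coe_sub] at hcg
    exact hf.eventually_lt_inv_mul_fGammaDiv hfs hgΓ (integrable_of_mem_Cb (hCb hgΓ))
      (hCb hgΓ).2.choose_spec hcg
  · filter_upwards [self_mem_nhdsWithin] with δ (hδ : 0 < δ)
    calc ((1 / δ : ℝ) : EReal) * fGammaDiv f ((fun g x => δ * g x) '' Γ) Q P
        ≤ ((1 / δ : ℝ) : EReal) * ((δ : EReal) * ipmW Γ Q P) := by
          gcongr
          exact fGammaDiv_const_mul_le hf.at_one (fun g hg => integrable_of_mem_Cb (hCb hg))
              hδ.le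
      _ = ipmW Γ Q P := by
          rw [← mul_assoc, ← EReal.coe_mul, one_div_mul_cancel hδ.ne', EReal.coe_one, one_mul]
      _ < c := hc

/-- For admissible and strictly admissible `f` and admissible `Γ`, with
`Γ_δ = {δ·g : g ∈ Γ}`: `lim_{δ↓0} (1/δ)·D_f^{Γ_δ}(Q‖P) = W^Γ(Q,P)`. -/
theorem stmt13 {S : Type*} [MetricSpace S] [CompleteSpace S]
    [TopologicalSpace.SeparableSpace S] [MeasurableSpace S] [BorelSpace S]
    (a b : EReal) (f : ℝ → EReal) (hf : IsF1 a b f) (hfa : AdmissibleF f)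
    (hfs : StrictlyConvexAtOne f)
    (Γ : Set (S → ℝ)) (hΓ : AdmissibleGamma Γ)
    (Q P : Measure S) [IsProbabilityMeasure Q] [IsProbabilityMeasure P] :
    Filter.Tendsto
      (fun δ : ℝ => (((1 / δ : ℝ)) : EReal)
        * fGammaDiv f ((fun (g : S → ℝ) => fun x => δ * g x) '' Γ) Q P)
      (𝓝[>] (0 : ℝ)) (𝓝 (ipmW Γ Q P)) :=
  stmt13_general a b f hf hfs Γ hΓ Q P
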